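/- For any bipartite graph G (2-partite hypergraph), the classical, quantum, and no-signaling simultaneous guessing probabilities of the game P^G all coincide, each equal to ν(G)/|E| (with ν(G) the maximum matching size). In particular, p_ns(P^G) ≤ p_c(P^G), combined with the trivial inequalities p_c ≤ p_q ≤ p_ns, gives equality. -/
import Mathlib


open scoped Classical

open Finset

/-- König-type bound: any fractional matching on a bipartite graph has total
weight at most the matching number.  Proved via the defect Hall theorem. -/
lemma frac_le_nu (A B : Type) [Fintype A] [Fintype B]
    (E : Finset (A × B)) (ν : ℕ)
    (hub : ∀ M : Finset (A × B), M ⊆ E →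
      (∀ e ∈ M, ∀ e' ∈ M, e ≠ e' → e.1 ≠ e'.1 ∧ e.2 ≠ e'.2) → M.card ≤ ν)
    (w : A × B → ℝ) (hw0 : ∀ e, 0 ≤ w e) (hwE : ∀ e, e ∉ E → w e = 0)
    (hrow : ∀ a, ∑ b, w (a, b) ≤ 1) (hcol : ∀ b, ∑ a, w (a, b) ≤ 1) :
    ∑ e ∈ E, w e ≤ (ν : ℝ) := by
  classical
  set N : Finset A → Finset B :=
    fun S => (E.filter (fun e => e.1 ∈ S)).image Prod.snd with hNdef
  obtain ⟨S, -, hSmax⟩ := Finset.exists_max_image (univ : Finset (Finset A))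
      (fun T => (T.card : ℤ) - ((N T).card : ℤ)) ⟨∅, mem_univ _⟩
  set d' : ℤ := (S.card : ℤ) - ((N S).card : ℤ) with hd'
  have hNempty : N ∅ = ∅ := by
    simp [hNdef]
  have hd'0 : 0 ≤ d' := by
    have h := hSmax ∅ (mem_univ _)
    rw [hNempty] at h
    simpa using h
  set d : ℕ := d'.toNat with hd
  have hdd : (d : ℤ) = d' := Int.toNat_of_nonneg hd'0
  -- Hall system: each `a : A` may be matched to a real neighbour or a dummy
  set t : A → Finset (B ⊕ Fin d) := fun a =>
    ((E.filter (fun e => e.1 = a)).image (fun e => Sum.inl e.2)) ∪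
      ((univ : Finset (Fin d)).image Sum.inr) with ht
  have hall : ∀ s : Finset A, s.card ≤ (s.biUnion t).card := by
    intro s
    rcases s.eq_empty_or_nonempty with rfl | ⟨a0, ha0⟩
    · simp
    have hsub : ((N s).image Sum.inl ∪ ((univ : Finset (Fin d)).image Sum.inr))
        ⊆ s.biUnion t := by
      intro x hx
      rcases mem_union.mp hx with hx | hx
      · obtain ⟨b, hb, rfl⟩ := mem_image.mp hx
        obtain ⟨e, he, rfl⟩ := mem_image.mp hb
        have heE := (mem_filter.mp he).1
        have hes := (mem_filter.mp he).2
        exact mem_biUnion.mpr ⟨e.1, hes, mem_union_left _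
          (mem_image.mpr ⟨e, mem_filter.mpr ⟨heE, rfl⟩, rfl⟩)⟩
      · exact mem_biUnion.mpr ⟨a0, ha0, mem_union_right _ hx⟩
    have hdisj : Disjoint ((N s).image Sum.inl)
        (((univ : Finset (Fin d)).image Sum.inr)) := by
      simp [Finset.disjoint_left]
    have hcardu : ((N s).image Sum.inl ∪ ((univ : Finset (Fin d)).image Sum.inr)).card
        = (N s).card + d := by
      rw [Finset.card_union_of_disjoint hdisj,
        Finset.card_image_of_injective _ Sum.inl_injective,
        Finset.card_image_of_injective _ Sum.inr_injective, Finset.card_univ,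
        Fintype.card_fin]
    have hdef : (s.card : ℤ) - ((N s).card : ℤ) ≤ d' := hSmax s (mem_univ _)
    have hle : s.card ≤ (N s).card + d := by omega
    calc s.card ≤ (N s).card + d := hle
      _ = ((N s).image Sum.inl ∪ ((univ : Finset (Fin d)).image Sum.inr)).card :=
          hcardu.symm
      _ ≤ (s.biUnion t).card := Finset.card_le_card hsub
  obtain ⟨f, hfinj, hft⟩ := (Finset.all_card_le_biUnion_card_iff_exists_injective t).mp hall
  set M : Finset (A × B) := E.filter (fun e => f e.1 = Sum.inl e.2) with hM
  have hMmatch : ∀ e ∈ M, ∀ e' ∈ M, e ≠ e' → e.1 ≠ e'.1 ∧ e.2 ≠ e'.2 := by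
    intro e he e' he' hne
    have h1 := (mem_filter.mp he).2
    have h2 := (mem_filter.mp he').2
    constructor
    · intro h
      apply hne
      have hh : (Sum.inl e.2 : B ⊕ Fin d) = Sum.inl e'.2 := by rw [← h1, ← h2, h]
      exact Prod.ext h (Sum.inl.inj hh)
    · intro h
      apply hne
      have hh : f e.1 = f e'.1 := by rw [h1, h2, h]
      exact Prod.ext (hfinj hh) h
  have hMν : M.card ≤ ν := hub M (filter_subset _ _) hMmatch
  -- card A ≤ M.card + d
  set A1 : Finset A := univ.filter (fun a => ∃ b, f a = Sum.inl b) with hA1def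
  set A2 : Finset A := univ.filter (fun a => ¬ ∃ b, f a = Sum.inl b) with hA2def
  have hA1 : A1.card ≤ M.card := by
    have himg : A1.image f ⊆ M.image (fun e => Sum.inl e.2) := by
      intro x hx
      obtain ⟨a, ha, rfl⟩ := mem_image.mp hx
      obtain ⟨b, hb⟩ := (mem_filter.mp ha).2
      have hta := hft a
      rw [ht] at hta
      rcases mem_union.mp hta with h | h
      · obtain ⟨e, he, heq⟩ := mem_image.mp h
        have heE := (mem_filter.mp he).1
        have he1 : e.1 = a := (mem_filter.mp he).2
        have heM : e ∈ M := mem_filter.mpr ⟨heE, by rw [he1, heq]⟩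
        exact mem_image.mpr ⟨e, heM, heq⟩
      · obtain ⟨k, -, hk⟩ := mem_image.mp h
        rw [← hk] at hb
        exact absurd hb (by simp)
    calc A1.card = (A1.image f).card :=
          (Finset.card_image_of_injective _ hfinj).symm
      _ ≤ (M.image (fun e => Sum.inl e.2)).card := Finset.card_le_card himg
      _ ≤ M.card := Finset.card_image_le
  have hA2 : A2.card ≤ d := by
    have himg : A2.image f ⊆ (univ : Finset (Fin d)).image Sum.inr := by
      intro x hx
      obtain ⟨a, ha, rfl⟩ := mem_image.mp hx
      have hnb := (mem_filter.mp ha).2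
      have hta := hft a
      rw [ht] at hta
      rcases mem_union.mp hta with h | h
      · obtain ⟨e, -, heq⟩ := mem_image.mp h
        exact absurd ⟨e.2, heq.symm⟩ hnb
      · exact h
    calc A2.card = (A2.image f).card :=
          (Finset.card_image_of_injective _ hfinj).symm
      _ ≤ ((univ : Finset (Fin d)).image Sum.inr).card := Finset.card_le_card himg
      _ ≤ d := by
          rw [Finset.card_image_of_injective _ Sum.inr_injective, Finset.card_univ,
            Fintype.card_fin]
  have hsplit : A1.card + A2.card = Fintype.card A := by
    rw [hA1def, hA2def, Finset.card_filter_add_card_filter_not, Finset.card_univ]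
  have hcardA : (Fintype.card A : ℤ) ≤ (ν : ℤ) + d' := by
    have := hMν
    omega
  -- the deficiency bound on the fractional matching
  have hScard : S.card ≤ Fintype.card A := by
    simpa using Finset.card_le_card (Finset.subset_univ S)
  have hsum : ∑ e ∈ E, w e ≤ (Fintype.card A : ℝ) - S.card + (N S).card := by
    have h1 : ∑ e ∈ E, w e = ∑ a, ∑ b, w (a, b) := by
      rw [← Fintype.sum_prod_type]
      exact Finset.sum_subset (Finset.subset_univ E) (fun x _ hx => hwE x hx)
    have h2 : ∑ a, ∑ b, w (a, b)
        = ∑ a ∈ S, ∑ b, w (a, b) + ∑ a ∈ Sᶜ, ∑ b, w (a, b) :=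
      (Finset.sum_add_sum_compl S _).symm
    have h3 : ∑ a ∈ Sᶜ, ∑ b, w (a, b) ≤ (Fintype.card A : ℝ) - S.card := by
      calc ∑ a ∈ Sᶜ, ∑ b, w (a, b) ≤ ∑ _a ∈ Sᶜ, (1 : ℝ) :=
            Finset.sum_le_sum (fun a _ => hrow a)
        _ = (Sᶜ.card : ℝ) := by simp
        _ = (Fintype.card A : ℝ) - S.card := by
            rw [Finset.card_compl]
            push_cast [Nat.cast_sub hScard]
            ring
    have h4 : ∑ a ∈ S, ∑ b, w (a, b) ≤ ((N S).card : ℝ) := by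
      rw [Finset.sum_comm]
      have hz : ∀ b ∈ (univ : Finset B), b ∉ N S → ∑ a ∈ S, w (a, b) = 0 := by
        intro b _ hb
        refine Finset.sum_eq_zero (fun a ha => hwE _ ?_)
        intro hab
        exact hb (mem_image.mpr ⟨(a, b), mem_filter.mpr ⟨hab, ha⟩, rfl⟩)
      have heq : ∑ b, ∑ a ∈ S, w (a, b) = ∑ b ∈ N S, ∑ a ∈ S, w (a, b) :=
        (Finset.sum_subset (Finset.subset_univ (N S)) hz).symm
      rw [heq]
      calc ∑ b ∈ N S, ∑ a ∈ S, w (a, b) ≤ ∑ _b ∈ N S, (1 : ℝ) := by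
            refine Finset.sum_le_sum (fun b _ => ?_)
            calc ∑ a ∈ S, w (a, b) ≤ ∑ a, w (a, b) :=
                  Finset.sum_le_sum_of_subset_of_nonneg (Finset.subset_univ S)
                    (fun a _ _ => hw0 _)
              _ ≤ 1 := hcol b
        _ = ((N S).card : ℝ) := by simp
    rw [h1, h2]
    linarith
  have hfinal : (Fintype.card A : ℝ) - S.card + (N S).card ≤ (ν : ℝ) := by
    have : (Fintype.card A : ℤ) - (S.card : ℤ) + ((N S).card : ℤ) ≤ (ν : ℤ) := by omega
    exact_mod_cast (by exact_mod_cast this : ((Fintype.card A : ℤ) - S.card + (N S).card : ℝ) ≤ (ν : ℝ))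
  linarith

/-- For a bipartite graph game P^G, the classical, quantum, and no-signaling
simultaneous guessing probabilities all coincide and equal ν(G)/|E|.  The
quantum value pq is abstracted as any value sandwiched between the classical
and no-signaling values (containment of strategy classes). -/
theorem bipartite_game_values_coincide
    (A B : Type) [Fintype A] [Fintype B]
    (E : Finset (A × B)) (hE : E.Nonempty)
    (ν : ℕ)
    (hν : IsGreatest {n : ℕ | ∃ M : Finset (A × B), M ⊆ E ∧
        (∀ e ∈ M, ∀ e' ∈ M, e ≠ e' → e.1 ≠ e'.1 ∧ e.2 ≠ e'.2) ∧ M.card = n} ν)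
    (pc pq pns : ℝ)
    (hpc : IsGreatest {p : ℝ | ∃ (f : A → A × B) (g : B → A × B),
        p = ((E.filter (fun e => f e.1 = e ∧ g e.2 = e)).card : ℝ) / (E.card : ℝ)} pc)
    (hpns : IsGreatest {p : ℝ | ∃ Q : (A × B) → (A × B) → A → B → ℝ,
        (∀ e1 e2 a b, 0 ≤ Q e1 e2 a b) ∧
        (∀ a b, ∑ e1 : A × B, ∑ e2 : A × B, Q e1 e2 a b = 1) ∧
        (∀ e1 e2 a b, (e1 ∉ E ∨ e2 ∉ E) → Q e1 e2 a b = 0) ∧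
        (∀ e2 a a' b, ∑ e1 : A × B, Q e1 e2 a b = ∑ e1 : A × B, Q e1 e2 a' b) ∧
        (∀ e1 a b b', ∑ e2 : A × B, Q e1 e2 a b = ∑ e2 : A × B, Q e1 e2 a b') ∧
        p = (∑ e ∈ E, Q e e e.1 e.2) / (E.card : ℝ)} pns)
    (hq1 : pc ≤ pq) (hq2 : pq ≤ pns) :
    pc = (ν : ℝ) / (E.card : ℝ) ∧
    pq = (ν : ℝ) / (E.card : ℝ) ∧
    pns = (ν : ℝ) / (E.card : ℝ) := by
  classical
  obtain ⟨e₀, he₀⟩ := hE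
  have hEpos : (0 : ℝ) < (E.card : ℝ) := by
    exact_mod_cast Finset.card_pos.mpr ⟨e₀, he₀⟩
  -- Lower bound: ν/|E| ≤ pc, via the strategy induced by a maximum matching.
  obtain ⟨M, hME, hMm, hMcard⟩ := hν.1
  have hlow : (ν : ℝ) / (E.card : ℝ) ≤ pc := by
    set f : A → A × B :=
      fun a => if h : ∃ e ∈ M, e.1 = a then h.choose else e₀ with hf
    set g : B → A × B :=
      fun b => if h : ∃ e ∈ M, e.2 = b then h.choose else e₀ with hg
    have hMsub : M ⊆ E.filter (fun e => f e.1 = e ∧ g e.2 = e) := by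
      intro e he
      refine Finset.mem_filter.mpr ⟨hME he, ?_, ?_⟩
      · have h : ∃ e' ∈ M, e'.1 = e.1 := ⟨e, he, rfl⟩
        have hs := h.choose_spec
        simp only [hf, dif_pos h]
        by_contra hne
        exact (hMm _ hs.1 e he hne).1 hs.2
      · have h : ∃ e' ∈ M, e'.2 = e.2 := ⟨e, he, rfl⟩
        have hs := h.choose_spec
        simp only [hg, dif_pos h]
        by_contra hne
        exact (hMm _ hs.1 e he hne).2 hs.2
    have hmem : ((E.filter (fun e => f e.1 = e ∧ g e.2 = e)).card : ℝ) / (E.card : ℝ)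
        ∈ {p : ℝ | ∃ (f : A → A × B) (g : B → A × B),
          p = ((E.filter (fun e => f e.1 = e ∧ g e.2 = e)).card : ℝ) / (E.card : ℝ)} :=
      ⟨f, g, rfl⟩
    have h1 := hpc.2 hmem
    have h2 : (ν : ℝ) ≤ ((E.filter (fun e => f e.1 = e ∧ g e.2 = e)).card : ℝ) := by
      have := Finset.card_le_card hMsub
      rw [hMcard] at this
      exact_mod_cast this
    calc (ν : ℝ) / (E.card : ℝ)
        ≤ ((E.filter (fun e => f e.1 = e ∧ g e.2 = e)).card : ℝ) / (E.card : ℝ) := by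
          gcongr
      _ ≤ pc := h1
  -- Upper bound: pns ≤ ν/|E|, via the fractional matching bound.
  obtain ⟨Q, hQ0, hQnorm, hQE, hQnsA, hQnsB, hpnseq⟩ := hpns.1
  set w : A × B → ℝ := fun e => Q e e e.1 e.2 with hw
  have hw0 : ∀ e, 0 ≤ w e := fun e => hQ0 _ _ _ _
  have hwE : ∀ e, e ∉ E → w e = 0 := fun e he => hQE e e e.1 e.2 (Or.inl he)
  have hrow : ∀ a, ∑ b, w (a, b) ≤ 1 := by
    intro a
    calc ∑ b, w (a, b) ≤ ∑ b, ∑ e2, Q (a, b) e2 a b :=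
          Finset.sum_le_sum (fun b _ =>
            Finset.single_le_sum (f := fun e2 => Q (a, b) e2 a b)
              (fun e2 _ => hQ0 _ _ _ _) (mem_univ (a, b)))
      _ = ∑ b, ∑ e2, Q (a, b) e2 a e₀.2 :=
          Finset.sum_congr rfl (fun b _ => hQnsB (a, b) a b e₀.2)
      _ ≤ ∑ e1, ∑ e2, Q e1 e2 a e₀.2 := by
          rw [Fintype.sum_prod_type]
          exact Finset.single_le_sum
            (f := fun a' => ∑ b, ∑ e2, Q (a', b) e2 a e₀.2)
            (fun a' _ => Finset.sum_nonneg fun b _ =>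
              Finset.sum_nonneg fun e2 _ => hQ0 _ _ _ _) (mem_univ a)
      _ = 1 := hQnorm a e₀.2
  have hcol : ∀ b, ∑ a, w (a, b) ≤ 1 := by
    intro b
    calc ∑ a, w (a, b) ≤ ∑ a, ∑ e1, Q e1 (a, b) a b :=
          Finset.sum_le_sum (fun a _ =>
            Finset.single_le_sum (f := fun e1 => Q e1 (a, b) a b)
              (fun e1 _ => hQ0 _ _ _ _) (mem_univ (a, b)))
      _ = ∑ a, ∑ e1, Q e1 (a, b) e₀.1 b :=
          Finset.sum_congr rfl (fun a _ => hQnsA (a, b) a e₀.1 b)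
      _ ≤ ∑ e2, ∑ e1, Q e1 e2 e₀.1 b := by
          rw [Fintype.sum_prod_type]
          refine Finset.sum_le_sum (fun a _ => ?_)
          exact Finset.single_le_sum
            (f := fun b' => ∑ e1, Q e1 (a, b') e₀.1 b)
            (fun b' _ => Finset.sum_nonneg fun e1 _ => hQ0 _ _ _ _) (mem_univ b)
      _ = 1 := by rw [Finset.sum_comm]; exact hQnorm e₀.1 b
  have hfrac : ∑ e ∈ E, w e ≤ (ν : ℝ) :=
    frac_le_nu A B E ν (fun M' hM'E hM'm => hν.2 ⟨M', hM'E, hM'm, rfl⟩)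
      w hw0 hwE hrow hcol
  have hhigh : pns ≤ (ν : ℝ) / (E.card : ℝ) := by
    rw [hpnseq]
    gcongr
  have h1 : pc = (ν : ℝ) / (E.card : ℝ) :=
    le_antisymm ((hq1.trans hq2).trans hhigh) hlow
  refine ⟨h1, le_antisymm (hq2.trans hhigh) (h1 ▸ hq1),
    le_antisymm hhigh ((hlow.trans hq1).trans hq2)⟩
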